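/- Let g be a symmetric positive definite n×n real matrix (n ≥ 2) and Φ a (1,2)-tensor symmetric in its lower indices with con(Φ) = 0. Set X = (1/m) tr_g(Φ) and A = Φ − (g⊗X)_0, where m = (n+2)(n−1)/(n+1). Then |Φ|²_g = |A|²_g + m·|X|²_g. -/
import Mathlib


open Matrix BigOperators

noncomputable section

namespace ProjFunctional

/-- Contraction of a (1,2)-tensor: `con(Φ)_i = Σ_k Φ^k_{ik}`. -/
def conT {n : ℕ} (Φ : Fin n → Fin n → Fin n → ℝ) : Fin n → ℝ :=
  fun i => ∑ k, Φ k i k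

/-- `Sym(α)^i_{jk} = δ^i_j α_k + δ^i_k α_j`. -/
def symT {n : ℕ} (α : Fin n → ℝ) : Fin n → Fin n → Fin n → ℝ :=
  fun i j k => (if i = j then α k else 0) + (if i = k then α j else 0)

/-- Trace-free part `Φ₀ = Φ - (1/(n+1)) Sym(con Φ)`. -/
def tfT {n : ℕ} (Φ : Fin n → Fin n → Fin n → ℝ) : Fin n → Fin n → Fin n → ℝ :=
  fun i j k => Φ i j k - (1 / ((n : ℝ) + 1)) * symT (conT Φ) i j k

/-- `(g⊗X)^i_{jk} = X^i g_{jk}`. -/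
def gT {n : ℕ} (g : Matrix (Fin n) (Fin n) ℝ) (X : Fin n → ℝ) :
    Fin n → Fin n → Fin n → ℝ :=
  fun i j k => X i * g j k

/-- Metric trace `(tr_g Φ)^i = Σ_{j,k} g^{jk} Φ^i_{jk}` (using the inverse matrix `g⁻¹`). -/
def trg {n : ℕ} (g : Matrix (Fin n) (Fin n) ℝ) (Φ : Fin n → Fin n → Fin n → ℝ) :
    Fin n → ℝ :=
  fun i => ∑ j, ∑ k, g⁻¹ j k * Φ i j k

/-- Inner product `⟨Φ,Ψ⟩_g = Σ Φ^i_{jk} g^{jb} g^{kc} g_{ia} Ψ^a_{bc}` on (1,2)-tensors. -/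
def ipT {n : ℕ} (g : Matrix (Fin n) (Fin n) ℝ) (Φ Ψ : Fin n → Fin n → Fin n → ℝ) : ℝ :=
  ∑ i, ∑ j, ∑ k, ∑ a, ∑ b, ∑ c, Φ i j k * g⁻¹ j b * g⁻¹ k c * g i a * Ψ a b c

/-- `|Φ|²_g = ⟨Φ,Φ⟩_g`. -/
def norm2T {n : ℕ} (g : Matrix (Fin n) (Fin n) ℝ) (Φ : Fin n → Fin n → Fin n → ℝ) : ℝ :=
  ipT g Φ Φ

/-- `|X|²_g = Σ g_{ij} X^i X^j` for a vector `X`. -/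
def vnorm2 {n : ℕ} (g : Matrix (Fin n) (Fin n) ℝ) (X : Fin n → ℝ) : ℝ :=
  ∑ i, ∑ j, g i j * X i * X j

/-- `⟨X,Y⟩_g = Σ g_{ij} X^i Y^j` for vectors. -/
def vip {n : ℕ} (g : Matrix (Fin n) (Fin n) ℝ) (X Y : Fin n → ℝ) : ℝ :=
  ∑ i, ∑ j, g i j * X i * Y j

/-- `|α|²_g = Σ g^{ij} α_i α_j` for a covector `α`. -/
def cnorm2 {n : ℕ} (g : Matrix (Fin n) (Fin n) ℝ) (α : Fin n → ℝ) : ℝ :=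
  ∑ i, ∑ j, g⁻¹ i j * α i * α j

/-- Musical flat `(X♭)_i = Σ_j g_{ij} X^j`. -/
def flatT {n : ℕ} (g : Matrix (Fin n) (Fin n) ℝ) (X : Fin n → ℝ) : Fin n → ℝ :=
  fun i => ∑ j, g i j * X j

/-- The constant `m = (n+2)(n-1)/(n+1)`. -/
def mconst (n : ℕ) : ℝ := ((n : ℝ) + 2) * ((n : ℝ) - 1) / ((n : ℝ) + 1)

/-- `(Ψ ⊛_g Ψ)_{ij} = Σ Ψ^k_{uv} Ψ^a_{bc} g_{ia} g_{jk} g^{ub} g^{vc}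
      - 2 Σ Ψ^k_{jc} Ψ^a_{ib} g_{ak} g^{bc}`. -/
def circT {n : ℕ} (g : Matrix (Fin n) (Fin n) ℝ) (Ψ : Fin n → Fin n → Fin n → ℝ) :
    Fin n → Fin n → ℝ :=
  fun i j =>
    (∑ k, ∑ u, ∑ v, ∑ a, ∑ b, ∑ c,
      Ψ k u v * Ψ a b c * g i a * g j k * g⁻¹ u b * g⁻¹ v c)
    - 2 * ∑ k, ∑ c, ∑ a, ∑ b, Ψ k j c * Ψ a i b * g a k * g⁻¹ b c

/-- Stress-energy tensor `T_g(Ψ) = (1/2)|Ψ|²_g g + Ψ ⊛_g Ψ`. -/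
def stressEnergy {n : ℕ} (g : Matrix (Fin n) (Fin n) ℝ)
    (Ψ : Fin n → Fin n → Fin n → ℝ) : Fin n → Fin n → ℝ :=
  fun i j => (1 / 2) * norm2T g Ψ * g i j + circT g Ψ i j

/-- `⟨T,h⟩_g = Σ T_{ij} g^{ia} g^{jb} h_{ab}` for (0,2)-tensors. -/
def ip2 {n : ℕ} (g : Matrix (Fin n) (Fin n) ℝ) (T h : Fin n → Fin n → ℝ) : ℝ :=
  ∑ i, ∑ j, ∑ a, ∑ b, T i j * g⁻¹ i a * g⁻¹ j b * h a b


section Aux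

variable {n : ℕ} {g : Matrix (Fin n) (Fin n) ℝ}

private lemma posdef_symm (hg : g.PosDef) : ∀ i j, g i j = g j i := by
  intro i j
  have h := hg.1
  rw [Matrix.IsHermitian] at h
  conv_lhs => rw [← h]
  simp [Matrix.conjTranspose_apply]

private lemma posdef_inv_symm (hg : g.PosDef) : ∀ i j, g⁻¹ i j = g⁻¹ j i := by
  intro i j
  have h := hg.1.inv
  rw [Matrix.IsHermitian] at h
  conv_lhs => rw [← h]
  simp [Matrix.conjTranspose_apply]

private lemma posdef_invmul (hg : g.PosDef) :
    ∀ i j, (∑ k, g⁻¹ i k * g k j) = if i = j then (1:ℝ) else 0 := by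
  intro i j
  have h : g⁻¹ * g = 1 := Matrix.nonsing_inv_mul g (isUnit_iff_ne_zero.mpr hg.det_pos.ne')
  have h2 := congrFun (congrFun h i) j
  simpa [Matrix.mul_apply, Matrix.one_apply] using h2

private lemma sum6_swap (F : (Fin n × Fin n × Fin n) → (Fin n × Fin n × Fin n) → ℝ) :
    (∑ i, ∑ j, ∑ k, ∑ a, ∑ b, ∑ c, F (i,j,k) (a,b,c))
    = ∑ i, ∑ j, ∑ k, ∑ a, ∑ b, ∑ c, F (a,b,c) (i,j,k) := by
  have e1 : (∑ i, ∑ j, ∑ k, ∑ a, ∑ b, ∑ c, F (i,j,k) (a,b,c))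
      = ∑ p : Fin n × Fin n × Fin n, ∑ q : Fin n × Fin n × Fin n, F p q := by
    simp only [Fintype.sum_prod_type]
  have e2 : (∑ i, ∑ j, ∑ k, ∑ a, ∑ b, ∑ c, F (a,b,c) (i,j,k))
      = ∑ p : Fin n × Fin n × Fin n, ∑ q : Fin n × Fin n × Fin n, F q p := by
    simp only [Fintype.sum_prod_type]
  rw [e1, e2, Finset.sum_comm]

private lemma ipT_comm (hs : ∀ i j, g i j = g j i) (hsi : ∀ i j, g⁻¹ i j = g⁻¹ j i)
    (Φ Ψ : Fin n → Fin n → Fin n → ℝ) : ipT g Φ Ψ = ipT g Ψ Φ := by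
  unfold ipT
  rw [sum6_swap (fun p q => Φ p.1 p.2.1 p.2.2 * g⁻¹ p.2.1 q.2.1 * g⁻¹ p.2.2 q.2.2
    * g p.1 q.1 * Ψ q.1 q.2.1 q.2.2)]
  refine Finset.sum_congr rfl fun i _ => Finset.sum_congr rfl fun j _ =>
    Finset.sum_congr rfl fun k _ => Finset.sum_congr rfl fun a _ =>
    Finset.sum_congr rfl fun b _ => Finset.sum_congr rfl fun c _ => ?_
  simp only
  rw [hsi b j, hsi c k, hs a i]; ring

private lemma ipT_expand (Φ G S : Fin n → Fin n → Fin n → ℝ) (c : ℝ) :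
    ipT g (fun i j k => Φ i j k - (G i j k - c * S i j k))
          (fun i j k => Φ i j k - (G i j k - c * S i j k))
    = ipT g Φ Φ - (ipT g Φ G - c * ipT g Φ S) - (ipT g G Φ - c * ipT g S Φ)
      + (ipT g G G - c * ipT g G S - c * (ipT g S G - c * ipT g S S)) := by
  unfold ipT
  simp only [Finset.mul_sum, ← Finset.sum_sub_distrib, ← Finset.sum_add_distrib]
  refine Finset.sum_congr rfl fun i _ => Finset.sum_congr rfl fun j _ =>
    Finset.sum_congr rfl fun k _ => Finset.sum_congr rfl fun a _ =>
    Finset.sum_congr rfl fun b _ => Finset.sum_congr rfl fun cc _ => ?_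
  ring

private lemma ginv_flat (hmul : ∀ i j, (∑ k, g⁻¹ i k * g k j) = if i = j then (1:ℝ) else 0)
    (X : Fin n → ℝ) (k : Fin n) : (∑ c, g⁻¹ k c * flatT g X c) = X k := by
  unfold flatT
  have h : ∀ c, g⁻¹ k c * (∑ d, g c d * X d) = ∑ d, g⁻¹ k c * g c d * X d := by
    intro c; rw [Finset.mul_sum]; exact Finset.sum_congr rfl fun d _ => by ring
  simp_rw [h]
  rw [Finset.sum_comm]
  have h2 : ∀ d, (∑ c, g⁻¹ k c * g c d * X d) = (if k = d then (1:ℝ) else 0) * X d := by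
    intro d; rw [← hmul k d, Finset.sum_mul]
  simp_rw [h2]
  simp

private lemma trace_ginv (hs : ∀ i j, g i j = g j i)
    (hmul : ∀ i j, (∑ k, g⁻¹ i k * g k j) = if i = j then (1:ℝ) else 0) :
    (∑ j : Fin n, ∑ k, g j k * g⁻¹ j k) = (n:ℝ) := by
  have h1 : ∀ j, (∑ k, g j k * g⁻¹ j k) = (1:ℝ) := by
    intro j
    have h : (∑ k, g j k * g⁻¹ j k) = ∑ k, g⁻¹ j k * g k j :=
      Finset.sum_congr rfl fun k _ => by rw [hs j k]; ring
    rw [h, hmul j j]; simp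
  simp [h1]

private lemma flat_dot (X : Fin n → ℝ) : (∑ k, flatT g X k * X k) = vnorm2 g X := by
  unfold flatT vnorm2
  simp_rw [Finset.sum_mul]
  exact Finset.sum_congr rfl fun k _ => Finset.sum_congr rfl fun d _ => by ring

private lemma ip_gT (hs : ∀ i j, g i j = g j i)
    (hmul : ∀ i j, (∑ k, g⁻¹ i k * g k j) = if i = j then (1:ℝ) else 0)
    (Φ : Fin n → Fin n → Fin n → ℝ) (X : Fin n → ℝ) :
    ipT g Φ (gT g X) = ∑ i, ∑ a, trg g Φ i * g i a * X a := by
  unfold ipT gT trg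
  have red : ∀ i j k a, (∑ b, ∑ c, Φ i j k * g⁻¹ j b * g⁻¹ k c * g i a * (X a * g b c))
      = Φ i j k * g⁻¹ j k * g i a * X a := by
    intro i j k a
    have hc : ∀ b, (∑ c, Φ i j k * g⁻¹ j b * g⁻¹ k c * g i a * (X a * g b c))
        = Φ i j k * g⁻¹ j b * g i a * X a * (if k = b then 1 else 0) := by
      intro b
      rw [← hmul k b, Finset.mul_sum]
      exact Finset.sum_congr rfl fun c _ => by rw [hs b c]; ring
    simp_rw [hc]
    simp [mul_ite, Finset.sum_ite_eq]
  simp_rw [red]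
  refine Finset.sum_congr rfl fun i _ => ?_
  have sw : (∑ j, ∑ k, ∑ a, Φ i j k * g⁻¹ j k * g i a * X a)
      = ∑ a, ∑ j, ∑ k, Φ i j k * g⁻¹ j k * g i a * X a := by
    calc (∑ j, ∑ k, ∑ a, Φ i j k * g⁻¹ j k * g i a * X a)
        = ∑ j, ∑ a, ∑ k, Φ i j k * g⁻¹ j k * g i a * X a :=
          Finset.sum_congr rfl fun j _ => Finset.sum_comm
      _ = ∑ a, ∑ j, ∑ k, Φ i j k * g⁻¹ j k * g i a * X a := Finset.sum_comm
  rw [sw]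
  refine Finset.sum_congr rfl fun a _ => ?_
  simp_rw [Finset.sum_mul]
  exact Finset.sum_congr rfl fun j _ => Finset.sum_congr rfl fun k _ => by ring

private lemma ip_sym_zero (hs : ∀ i j, g i j = g j i)
    (hmul : ∀ i j, (∑ k, g⁻¹ i k * g k j) = if i = j then (1:ℝ) else 0)
    (Φ : Fin n → Fin n → Fin n → ℝ) (hΦ : ∀ i j k, Φ i j k = Φ i k j)
    (hcon : conT Φ = fun _ => (0 : ℝ)) (α : Fin n → ℝ) :
    ipT g Φ (symT α) = 0 := by
  have hc1 : ∀ j, (∑ i, Φ i j i) = 0 := by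
    intro j; simpa [conT] using congrFun hcon j
  have hc2 : ∀ k, (∑ i, Φ i i k) = 0 := by
    intro k
    have h : (∑ i, Φ i i k) = ∑ i, Φ i k i := Finset.sum_congr rfl fun i _ => hΦ i i k
    rw [h]; exact hc1 k
  unfold ipT symT
  simp_rw [mul_add, Finset.sum_add_distrib]
  have hT1 : (∑ i, ∑ j, ∑ k, ∑ a, ∑ b, ∑ c,
      Φ i j k * g⁻¹ j b * g⁻¹ k c * g i a * (if a = b then α c else 0)) = 0 := by
    have h1 : ∀ i j k a b, (∑ c, Φ i j k * g⁻¹ j b * g⁻¹ k c * g i a * (if a = b then α c else 0))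
        = Φ i j k * g⁻¹ j b * g i a * (if a = b then (1:ℝ) else 0) * (∑ c, g⁻¹ k c * α c) := by
      intro i j k a b
      rw [Finset.mul_sum]
      exact Finset.sum_congr rfl fun c _ => by
        by_cases h : a = b <;> simp [h] <;> ring
    simp_rw [h1]
    have h2 : ∀ i j k, (∑ a, Φ i j k * g⁻¹ j a * g i a * (∑ c, g⁻¹ k c * α c))
        = Φ i j k * (∑ c, g⁻¹ k c * α c) * (if j = i then (1:ℝ) else 0) := by
      intro i j k
      rw [← hmul j i, Finset.mul_sum]
      exact Finset.sum_congr rfl fun a _ => by rw [hs i a]; ring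
    simp only [mul_ite, mul_one, mul_zero, ite_mul, zero_mul, one_mul,
      Finset.sum_ite_eq, Finset.mem_univ, if_true]
    simp_rw [h2]
    simp only [mul_ite, mul_one, mul_zero, ite_mul, zero_mul, one_mul,
      ← Finset.sum_mul, Finset.sum_ite_eq', Finset.mem_univ, if_true]
    rw [Finset.sum_comm]
    have hpull : ∀ (y x : Fin n), (∑ x1, if y = x then Φ x y x1 * (∑ c, g⁻¹ x1 c * α c) else 0)
        = if y = x then (∑ x1, Φ x y x1 * (∑ c, g⁻¹ x1 c * α c)) else 0 := by
      intro y x; split <;> simp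
    simp_rw [hpull, Finset.sum_ite_eq, Finset.mem_univ, if_true]
    rw [Finset.sum_comm]
    simp_rw [← Finset.sum_mul]
    simp [hc2]
  have hT2 : (∑ i, ∑ j, ∑ k, ∑ a, ∑ b, ∑ c,
      Φ i j k * g⁻¹ j b * g⁻¹ k c * g i a * (if a = c then α b else 0)) = 0 := by
    have h1 : ∀ i j k a b, (∑ c, Φ i j k * g⁻¹ j b * g⁻¹ k c * g i a * (if a = c then α b else 0))
        = Φ i j k * g⁻¹ j b * α b * g i a * g⁻¹ k a := by
      intro i j k a b
      have h : ∀ c, Φ i j k * g⁻¹ j b * g⁻¹ k c * g i a * (if a = c then α b else 0)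
          = (if a = c then Φ i j k * g⁻¹ j b * α b * g i a * g⁻¹ k c else 0) := by
        intro c; by_cases h : a = c <;> simp [h] <;> ring
      simp_rw [h]
      simp [Finset.sum_ite_eq]
    simp_rw [h1]
    have h2 : ∀ i j k, (∑ a, Φ i j k * g i a * g⁻¹ k a * (∑ b, g⁻¹ j b * α b))
        = Φ i j k * (∑ b, g⁻¹ j b * α b) * (if k = i then (1:ℝ) else 0) := by
      intro i j k
      rw [← hmul k i, Finset.mul_sum]
      exact Finset.sum_congr rfl fun a _ => by rw [hs i a]; ring
    have hb : ∀ i j k a, (∑ b, Φ i j k * g⁻¹ j b * α b * g i a * g⁻¹ k a)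
        = Φ i j k * g i a * g⁻¹ k a * (∑ b, g⁻¹ j b * α b) := by
      intro i j k a
      rw [Finset.mul_sum]
      exact Finset.sum_congr rfl fun b _ => by ring
    simp_rw [hb, h2]
    simp only [mul_ite, mul_one, mul_zero, ite_mul, zero_mul, one_mul,
      ← Finset.sum_mul, Finset.sum_ite_eq', Finset.mem_univ, if_true]
    rw [Finset.sum_comm]
    simp_rw [← Finset.sum_mul]
    simp [hc1]
  rw [hT1, hT2]; ring

private lemma ip_gT_gT (hs : ∀ i j, g i j = g j i)
    (hmul : ∀ i j, (∑ k, g⁻¹ i k * g k j) = if i = j then (1:ℝ) else 0)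
    (X : Fin n → ℝ) :
    ipT g (gT g X) (gT g X) = (n:ℝ) * vnorm2 g X := by
  unfold ipT gT
  have red : ∀ i j k a, (∑ b, ∑ c, X i * g j k * g⁻¹ j b * g⁻¹ k c * g i a * (X a * g b c))
      = X i * g j k * g⁻¹ j k * g i a * X a := by
    intro i j k a
    have hc : ∀ b, (∑ c, X i * g j k * g⁻¹ j b * g⁻¹ k c * g i a * (X a * g b c))
        = X i * g j k * g⁻¹ j b * g i a * X a * (if k = b then 1 else 0) := by
      intro b; rw [← hmul k b, Finset.mul_sum]
      exact Finset.sum_congr rfl fun c _ => by rw [hs b c]; ring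
    simp_rw [hc]
    simp [mul_ite, Finset.sum_ite_eq]
  simp_rw [red]
  have fact : ∀ i, (∑ j, ∑ k, ∑ a, X i * g j k * g⁻¹ j k * g i a * X a)
      = (∑ j, ∑ k, g j k * g⁻¹ j k) * (∑ a, X i * g i a * X a) := by
    intro i
    rw [Finset.sum_mul]
    refine Finset.sum_congr rfl fun j _ => ?_
    rw [Finset.sum_mul]
    refine Finset.sum_congr rfl fun k _ => ?_
    rw [Finset.mul_sum]
    exact Finset.sum_congr rfl fun a _ => by ring
  simp_rw [fact, trace_ginv hs hmul]
  rw [← Finset.mul_sum]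
  unfold vnorm2
  congr 1
  exact Finset.sum_congr rfl fun i _ => Finset.sum_congr rfl fun a _ => by ring

private lemma ip_gT_sym (hs : ∀ i j, g i j = g j i)
    (hmul : ∀ i j, (∑ k, g⁻¹ i k * g k j) = if i = j then (1:ℝ) else 0)
    (X : Fin n → ℝ) :
    ipT g (gT g X) (symT (flatT g X)) = 2 * vnorm2 g X := by
  unfold ipT gT symT
  simp_rw [mul_add, Finset.sum_add_distrib]
  have hT1 : (∑ i, ∑ j, ∑ k, ∑ a, ∑ b, ∑ c,
      X i * g j k * g⁻¹ j b * g⁻¹ k c * g i a * (if a = b then flatT g X c else 0))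
      = vnorm2 g X := by
    have h1 : ∀ i j k a b, (∑ c, X i * g j k * g⁻¹ j b * g⁻¹ k c * g i a * (if a = b then flatT g X c else 0))
        = (X i * g j k * g⁻¹ j b * g i a * if a = b then (1:ℝ) else 0) * X k := by
      intro i j k a b
      rw [← ginv_flat hmul X k, Finset.mul_sum]
      exact Finset.sum_congr rfl fun c _ => by
        by_cases h : a = b <;> simp [h] <;> ring
    simp_rw [h1]
    simp only [mul_ite, mul_one, mul_zero, ite_mul, zero_mul, one_mul,
      Finset.sum_ite_eq, Finset.mem_univ, if_true]
    have h2 : ∀ i j k, (∑ a, X i * g j k * g⁻¹ j a * g i a * X k)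
        = X i * g j k * X k * (if j = i then (1:ℝ) else 0) := by
      intro i j k
      rw [← hmul j i, Finset.mul_sum]
      exact Finset.sum_congr rfl fun a _ => by rw [hs i a]; ring
    simp_rw [h2]
    have hpull : ∀ i j, (∑ k, X i * g j k * X k * (if j = i then (1:ℝ) else 0))
        = (if j = i then (∑ k, X i * g j k * X k) else 0) := by
      intro i j; split <;> simp
    simp_rw [hpull, Finset.sum_ite_eq', Finset.mem_univ, if_true]
    unfold vnorm2
    exact Finset.sum_congr rfl fun i _ => Finset.sum_congr rfl fun k _ => by ring
  have hT2 : (∑ i, ∑ j, ∑ k, ∑ a, ∑ b, ∑ c,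
      X i * g j k * g⁻¹ j b * g⁻¹ k c * g i a * (if a = c then flatT g X b else 0))
      = vnorm2 g X := by
    have h1 : ∀ i j k a b, (∑ c, X i * g j k * g⁻¹ j b * g⁻¹ k c * g i a * (if a = c then flatT g X b else 0))
        = X i * g j k * g⁻¹ j b * flatT g X b * g i a * g⁻¹ k a := by
      intro i j k a b
      have h : ∀ c, X i * g j k * g⁻¹ j b * g⁻¹ k c * g i a * (if a = c then flatT g X b else 0)
          = (if a = c then X i * g j k * g⁻¹ j b * flatT g X b * g i a * g⁻¹ k c else 0) := by
        intro c; by_cases h : a = c <;> simp [h] <;> ring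
      simp_rw [h]
      simp [Finset.sum_ite_eq]
    simp_rw [h1]
    have h2 : ∀ i j k a, (∑ b, X i * g j k * g⁻¹ j b * flatT g X b * g i a * g⁻¹ k a)
        = X i * g j k * g i a * g⁻¹ k a * X j := by
      intro i j k a
      rw [← ginv_flat hmul X j, Finset.mul_sum]
      exact Finset.sum_congr rfl fun b _ => by ring
    simp_rw [h2]
    have h3 : ∀ i j k, (∑ a, X i * g j k * g i a * g⁻¹ k a * X j)
        = X i * g j k * X j * (if k = i then (1:ℝ) else 0) := by
      intro i j k
      rw [← hmul k i, Finset.mul_sum]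
      exact Finset.sum_congr rfl fun a _ => by rw [hs i a]; ring
    simp_rw [h3]
    simp only [mul_ite, mul_one, mul_zero, ite_mul, zero_mul, one_mul,
      Finset.sum_ite_eq', Finset.mem_univ, if_true]
    unfold vnorm2
    exact Finset.sum_congr rfl fun i _ => Finset.sum_congr rfl fun j _ => by
      rw [hs j i]; ring
  rw [hT1, hT2]; ring

private lemma ip_sym_sym (hs : ∀ i j, g i j = g j i)
    (hmul : ∀ i j, (∑ k, g⁻¹ i k * g k j) = if i = j then (1:ℝ) else 0)
    (X : Fin n → ℝ) :
    ipT g (symT (flatT g X)) (symT (flatT g X)) = (2*(n:ℝ)+2) * vnorm2 g X := by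
  unfold ipT symT
  simp_rw [add_mul, mul_add, Finset.sum_add_distrib]
  have hS1 : (∑ i, ∑ j, ∑ k, ∑ a, ∑ b, ∑ c,
      (if i = j then flatT g X k else 0) * g⁻¹ j b * g⁻¹ k c * g i a *
        (if a = b then flatT g X c else 0)) = (n:ℝ) * vnorm2 g X := by
    have h1 : ∀ i j k a b, (∑ c, (if i = j then flatT g X k else 0) * g⁻¹ j b * g⁻¹ k c * g i a *
        (if a = b then flatT g X c else 0))
        = ((if i = j then flatT g X k else 0) * g⁻¹ j b * g i a * if a = b then (1:ℝ) else 0) * X k := by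
      intro i j k a b
      rw [← ginv_flat hmul X k, Finset.mul_sum]
      exact Finset.sum_congr rfl fun c _ => by
        by_cases h : a = b <;> simp [h] <;> ring
    simp_rw [h1]
    simp only [mul_ite, mul_one, mul_zero, ite_mul, zero_mul, one_mul,
      Finset.sum_ite_eq, Finset.mem_univ, if_true]
    have h2 : ∀ i j k, (∑ a, if i = j then flatT g X k * g⁻¹ j a * g i a * X k else 0)
        = (if i = j then flatT g X k * X k else 0) * (if j = i then (1:ℝ) else 0) := by
      intro i j k
      by_cases h : i = j
      · simp only [if_pos h]
        rw [← hmul j i, Finset.mul_sum]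
        exact Finset.sum_congr rfl fun a _ => by rw [hs i a]; ring
      · simp [h]
    simp_rw [h2]
    have hpull : ∀ (i j : Fin n), (∑ k, (if i = j then flatT g X k * X k else 0) * (if j = i then (1:ℝ) else 0))
        = (if i = j then (∑ k, flatT g X k * X k) else 0) * (if j = i then (1:ℝ) else 0) := by
      intro i j
      by_cases h : i = j
      · simp only [if_pos h]
        exact (Finset.sum_mul ..).symm
      · simp [h]
    simp_rw [hpull]
    simp only [mul_ite, mul_one, mul_zero, ite_mul, zero_mul, one_mul,
      Finset.sum_ite_eq, Finset.mem_univ, if_true, eq_self_iff_true]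
    simp_rw [flat_dot]
    simp [Finset.card_univ]
  have hS2 : (∑ i, ∑ j, ∑ k, ∑ a, ∑ b, ∑ c,
      (if i = j then flatT g X k else 0) * g⁻¹ j b * g⁻¹ k c * g i a *
        (if a = c then flatT g X b else 0)) = vnorm2 g X := by
    have h1 : ∀ i j k a b, (∑ c, (if i = j then flatT g X k else 0) * g⁻¹ j b * g⁻¹ k c * g i a *
        (if a = c then flatT g X b else 0))
        = (if i = j then flatT g X k else 0) * g⁻¹ j b * flatT g X b * g i a * g⁻¹ k a := by
      intro i j k a b
      have h : ∀ c, (if i = j then flatT g X k else 0) * g⁻¹ j b * g⁻¹ k c * g i a *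
          (if a = c then flatT g X b else 0)
          = (if a = c then (if i = j then flatT g X k else 0) * g⁻¹ j b * flatT g X b * g i a * g⁻¹ k c else 0) := by
        intro c; by_cases h : a = c <;> simp [h] <;> ring
      simp_rw [h]
      simp [Finset.sum_ite_eq]
    simp_rw [h1]
    have h2 : ∀ i j k a, (∑ b, (if i = j then flatT g X k else 0) * g⁻¹ j b * flatT g X b * g i a * g⁻¹ k a)
        = (if i = j then flatT g X k else 0) * g i a * g⁻¹ k a * X j := by
      intro i j k a
      rw [← ginv_flat hmul X j, Finset.mul_sum]
      exact Finset.sum_congr rfl fun b _ => by ring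
    simp_rw [h2]
    have h3 : ∀ i j k, (∑ a, (if i = j then flatT g X k else 0) * g i a * g⁻¹ k a * X j)
        = (if i = j then flatT g X k else 0) * X j * (if k = i then (1:ℝ) else 0) := by
      intro i j k
      rw [← hmul k i, Finset.mul_sum]
      exact Finset.sum_congr rfl fun a _ => by rw [hs i a]; ring
    simp_rw [h3]
    simp only [mul_ite, mul_one, mul_zero, ite_mul, zero_mul, one_mul,
      Finset.sum_ite_eq, Finset.sum_ite_eq', Finset.mem_univ, if_true]
    rw [flat_dot]
  have hS3 : (∑ i, ∑ j, ∑ k, ∑ a, ∑ b, ∑ c,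
      (if i = k then flatT g X j else 0) * g⁻¹ j b * g⁻¹ k c * g i a *
        (if a = b then flatT g X c else 0)) = vnorm2 g X := by
    have h1 : ∀ i j k a b, (∑ c, (if i = k then flatT g X j else 0) * g⁻¹ j b * g⁻¹ k c * g i a *
        (if a = b then flatT g X c else 0))
        = ((if i = k then flatT g X j else 0) * g⁻¹ j b * g i a * if a = b then (1:ℝ) else 0) * X k := by
      intro i j k a b
      rw [← ginv_flat hmul X k, Finset.mul_sum]
      exact Finset.sum_congr rfl fun c _ => by
        by_cases h : a = b <;> simp [h] <;> ring
    simp_rw [h1]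
    simp only [mul_ite, mul_one, mul_zero, ite_mul, zero_mul, one_mul,
      Finset.sum_ite_eq, Finset.mem_univ, if_true]
    have h2 : ∀ i j k, (∑ a, if i = k then flatT g X j * g⁻¹ j a * g i a * X k else 0)
        = (if i = k then flatT g X j * X k else 0) * (if j = i then (1:ℝ) else 0) := by
      intro i j k
      by_cases h : i = k
      · simp only [if_pos h]
        rw [← hmul j i, Finset.mul_sum]
        exact Finset.sum_congr rfl fun a _ => by rw [hs i a]; ring
      · simp [h]
    simp_rw [h2]
    simp only [← Finset.sum_mul, Finset.sum_ite_eq, Finset.mem_univ, if_true]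
    simp only [mul_ite, mul_one, mul_zero, ite_mul, zero_mul, one_mul,
      Finset.sum_ite_eq', Finset.mem_univ, if_true]
    rw [flat_dot]
  have hS4 : (∑ i, ∑ j, ∑ k, ∑ a, ∑ b, ∑ c,
      (if i = k then flatT g X j else 0) * g⁻¹ j b * g⁻¹ k c * g i a *
        (if a = c then flatT g X b else 0)) = (n:ℝ) * vnorm2 g X := by
    have h1 : ∀ i j k a b, (∑ c, (if i = k then flatT g X j else 0) * g⁻¹ j b * g⁻¹ k c * g i a *
        (if a = c then flatT g X b else 0))
        = (if i = k then flatT g X j else 0) * g⁻¹ j b * flatT g X b * g i a * g⁻¹ k a := by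
      intro i j k a b
      have h : ∀ c, (if i = k then flatT g X j else 0) * g⁻¹ j b * g⁻¹ k c * g i a *
          (if a = c then flatT g X b else 0)
          = (if a = c then (if i = k then flatT g X j else 0) * g⁻¹ j b * flatT g X b * g i a * g⁻¹ k c else 0) := by
        intro c; by_cases h : a = c <;> simp [h] <;> ring
      simp_rw [h]
      simp [Finset.sum_ite_eq]
    simp_rw [h1]
    have h2 : ∀ i j k a, (∑ b, (if i = k then flatT g X j else 0) * g⁻¹ j b * flatT g X b * g i a * g⁻¹ k a)
        = (if i = k then flatT g X j else 0) * g i a * g⁻¹ k a * X j := by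
      intro i j k a
      rw [← ginv_flat hmul X j, Finset.mul_sum]
      exact Finset.sum_congr rfl fun b _ => by ring
    simp_rw [h2]
    have h3 : ∀ i j k, (∑ a, (if i = k then flatT g X j else 0) * g i a * g⁻¹ k a * X j)
        = (if i = k then flatT g X j else 0) * X j * (if k = i then (1:ℝ) else 0) := by
      intro i j k
      rw [← hmul k i, Finset.mul_sum]
      exact Finset.sum_congr rfl fun a _ => by rw [hs i a]; ring
    simp_rw [h3]
    simp only [mul_ite, mul_one, mul_zero, ite_mul, zero_mul, one_mul,
      Finset.sum_ite_eq, Finset.sum_ite_eq', Finset.mem_univ, if_true]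
    simp_rw [flat_dot]
    simp [Finset.card_univ]
  rw [hS1, hS2, hS3, hS4]
  ring

end Aux

/-- |Φ|²_g = |A|²_g + m·|X|²_g. -/
theorem norm2T_split {n : ℕ} (hn : 2 ≤ n) (g : Matrix (Fin n) (Fin n) ℝ)
    (hg : g.PosDef) (Φ : Fin n → Fin n → Fin n → ℝ)
    (hΦ : ∀ i j k, Φ i j k = Φ i k j) (hcon : conT Φ = fun _ => (0 : ℝ))
    (X : Fin n → ℝ) (hX : X = fun i => (1 / mconst n) * trg g Φ i)
    (A : Fin n → Fin n → Fin n → ℝ)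
    (hA : A = fun i j k => Φ i j k - tfT (gT g X) i j k) :
    norm2T g Φ = norm2T g A + mconst n * vnorm2 g X := by
  have hs := posdef_symm hg
  have hsi := posdef_inv_symm hg
  have hmul := posdef_invmul hg
  have hcg : conT (gT g X) = flatT g X := by
    funext i; simp [conT, gT, flatT, mul_comm]
  have hA' : A = fun i j k => Φ i j k -
      (gT g X i j k - (1/((n:ℝ)+1)) * symT (flatT g X) i j k) := by
    rw [hA]; funext i j k; simp only [tfT, hcg]
  have h2n : (2:ℝ) ≤ (n:ℝ) := by exact_mod_cast hn
  have hn1 : ((n:ℝ)+1) ≠ 0 := by positivity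
  have hm : mconst n ≠ 0 := by
    unfold mconst
    have hpos : (0:ℝ) < ((n:ℝ)+2) * ((n:ℝ)-1) := by nlinarith
    exact div_ne_zero hpos.ne' (by positivity)
  have htr : ∀ i, trg g Φ i = mconst n * X i := by
    intro i
    have hXi : X i = 1 / mconst n * trg g Φ i := by rw [hX]
    rw [hXi]
    field_simp
  have h1 : ipT g Φ (gT g X) = mconst n * vnorm2 g X := by
    rw [ip_gT hs hmul Φ X]
    simp_rw [htr]
    unfold vnorm2
    rw [Finset.mul_sum]
    refine Finset.sum_congr rfl fun i _ => ?_
    rw [Finset.mul_sum]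
    exact Finset.sum_congr rfl fun a _ => by ring
  have h2 : ipT g Φ (symT (flatT g X)) = 0 := ip_sym_zero hs hmul Φ hΦ hcon _
  have h3 : ipT g (gT g X) Φ = mconst n * vnorm2 g X := (ipT_comm hs hsi _ _).trans h1
  have h4 : ipT g (symT (flatT g X)) Φ = 0 := (ipT_comm hs hsi _ _).trans h2
  have h5 := ip_gT_gT hs hmul X
  have h6 := ip_gT_sym hs hmul X
  have h7 : ipT g (symT (flatT g X)) (gT g X) = 2 * vnorm2 g X :=
    (ipT_comm hs hsi _ _).trans h6
  have h8 := ip_sym_sym hs hmul X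
  simp only [norm2T]
  rw [hA', ipT_expand Φ (gT g X) (symT (flatT g X)) (1/((n:ℝ)+1))]
  rw [h1, h2, h3, h4, h5, h6, h7, h8]
  unfold mconst
  field_simp
  ring

end ProjFunctional
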